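/- For 0 < q < 1 and a > 0, if β'_n(λ) satisfies the recurrence A_n β'_{n+1}(λ) + C_n β'_{n-1}(λ) = λ β'_n(λ) with β'_0 = 1, β'_{-1} = 0, A_n = (1+a²q^{n+1})/(1+a²q^{2n+1}), C_n = a²q^{n+1}(1-q^n)/(1+a²q^{2n+1}), and β_n(λ) = [ (-a²q;q)_n (1+a²q^{2n+1}) / ((q;q)_n (1+a²q) a^{2n}) ]^{1/2} q^{-n(n+3)/4} β'_n(λ), then β_n satisfies a_n β_{n+1}(λ) + a_{n-1} β_{n-1}(λ) = λ β_n(λ) where a_{n-1} = (a²q^{n+1})^{1/2} [ (1-q^n)(1+a²q^n) / ((1+a²q^{2n-1})(1+a²q^{2n+1})) ]^{1/2}. -/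
import Mathlib


/-- Finite q-Pochhammer symbol `(x;q)_n = ∏_{j=0}^{n-1} (1 - x q^j)`. -/
noncomputable def qPoch (x q : ℝ) (n : ℕ) : ℝ := ∏ j ∈ Finset.range n, (1 - x * q ^ j)

/-- Infinite q-Pochhammer symbol `(x;q)_∞ = ∏_{j=0}^∞ (1 - x q^j)`. -/
noncomputable def qPochInf (x q : ℝ) : ℝ := ∏' j : ℕ, (1 - x * q ^ j)

/-- `A_n = (1 + a² q^{n+1})/(1 + a² q^{2n+1})`. -/
noncomputable def Acoef (a q : ℝ) (n : ℕ) : ℝ :=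
  (1 + a ^ 2 * q ^ (n + 1)) / (1 + a ^ 2 * q ^ (2 * n + 1))

/-- `C_n = a² q^{n+1}(1 - q^n)/(1 + a² q^{2n+1})`. -/
noncomputable def Ccoef (a q : ℝ) (n : ℕ) : ℝ :=
  a ^ 2 * q ^ (n + 1) * (1 - q ^ n) / (1 + a ^ 2 * q ^ (2 * n + 1))

/-- `a_{n-1} = (a² q^{n+1})^{1/2} ((1-q^n)(1+a² q^n)/((1+a² q^{2n-1})(1+a² q^{2n+1})))^{1/2}`,
indexed so that `aSub n` is `a_{n-1}` (in particular `aSub 0 = 0`). -/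
noncomputable def aSub (a q : ℝ) (n : ℕ) : ℝ :=
  Real.sqrt (a ^ 2 * q ^ (n + 1)) *
    Real.sqrt ((1 - q ^ n) * (1 + a ^ 2 * q ^ n) /
      ((1 + a ^ 2 * q ^ (2 * n - 1 : ℤ)) * (1 + a ^ 2 * q ^ (2 * n + 1))))

/-- Normalizing factor `d_n = [(-a²q;q)_n (1+a²q^{2n+1})/((q;q)_n (1+a²q) a^{2n})]^{1/2} q^{-n(n+3)/4}`. -/
noncomputable def dCoef (a q : ℝ) (n : ℕ) : ℝ :=
  Real.sqrt (qPoch (-(a ^ 2 * q)) q n * (1 + a ^ 2 * q ^ (2 * n + 1)) /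
      (qPoch q q n * (1 + a ^ 2 * q) * a ^ (2 * n))) *
    q ^ (-((n : ℝ) * (n + 3)) / 4)

lemma qPoch_succ (x q : ℝ) (n : ℕ) : qPoch x q (n+1) = qPoch x q n * (1 - x * q ^ n) := by
  simp [qPoch, Finset.prod_range_succ]

lemma qPoch_neg_pos (a q : ℝ) (hq0 : 0 < q) (ha : 0 < a) (n : ℕ) :
    0 < qPoch (-(a ^ 2 * q)) q n := by
  apply Finset.prod_pos
  intro j _
  have : 1 - -(a ^ 2 * q) * q ^ j = 1 + a ^ 2 * q * q ^ j := by ring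
  rw [this]; positivity

lemma qPoch_q_pos (q : ℝ) (hq0 : 0 < q) (hq1 : q < 1) (n : ℕ) :
    0 < qPoch q q n := by
  apply Finset.prod_pos
  intro j _
  have h : q * q ^ j < 1 := by
    calc q * q ^ j ≤ q * 1 := by
          apply mul_le_mul_of_nonneg_left _ hq0.le
          exact pow_le_one₀ hq0.le hq1.le
      _ = q := mul_one q
      _ < 1 := hq1
  linarith

lemma aSub_succ_zpow (a q : ℝ) (hq0 : 0 < q) (n : ℕ) :
    aSub a q (n + 1) = Real.sqrt (a ^ 2 * q ^ (n + 2)) *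
      Real.sqrt ((1 - q ^ (n+1)) * (1 + a ^ 2 * q ^ (n+1)) /
        ((1 + a ^ 2 * q ^ (2 * n + 1)) * (1 + a ^ 2 * q ^ (2 * n + 3)))) := by
  unfold aSub
  have h1 : (q : ℝ) ^ (2 * ((n+1 : ℕ) : ℤ) - 1) = q ^ (2*n+1 : ℕ) := by
    rw [show (2 * ((n+1:ℕ):ℤ) - 1) = ((2*n+1 : ℕ):ℤ) by push_cast; ring, zpow_natCast]
  rw [h1, show 2*(n+1)+1 = 2*n+3 from by ring, show n+1+1 = n+2 from rfl]

lemma lem1 (q a : ℝ) (hq0 : 0 < q) (hq1 : q < 1) (ha : 0 < a) (n : ℕ) :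
    aSub a q (n + 1) * dCoef a q (n + 1) = Acoef a q n * dCoef a q n := by
  have hPn := qPoch_neg_pos a q hq0 ha n
  have hQn := qPoch_q_pos q hq0 hq1 n
  have h1q : 0 < 1 - q * q ^ n := by
    have h : q * q ^ n < 1 := by
      calc q * q ^ n ≤ q * 1 := by
            exact mul_le_mul_of_nonneg_left (pow_le_one₀ hq0.le hq1.le) hq0.le
        _ < 1 := by linarith
    linarith
  have hA : ∀ m : ℕ, (0:ℝ) < 1 + a ^ 2 * q ^ m := fun m => by positivity
  rw [aSub_succ_zpow a q hq0 n]
  set e1 : ℝ := -((((n:ℕ)+1 : ℕ) : ℝ) * (((n:ℕ)+1 : ℕ) + 3)) / 4 with he1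
  set e0 : ℝ := -((n : ℝ) * ((n:ℝ) + 3)) / 4 with he0
  have hu : (0:ℝ) ≤ a ^ 2 * q ^ (n + 2) := by positivity
  have hv : (0:ℝ) ≤ (1 - q ^ (n+1)) * (1 + a ^ 2 * q ^ (n+1)) /
      ((1 + a ^ 2 * q ^ (2 * n + 1)) * (1 + a ^ 2 * q ^ (2 * n + 3))) := by
    have := h1q; have := hA (n+1); have := hA (2*n+1); have := hA (2*n+3)
    have hq' : (0:ℝ) ≤ 1 - q ^ (n+1) := by rw [pow_succ, mul_comm]; linarith
    positivity
  have hw1 : (0:ℝ) ≤ qPoch (-(a ^ 2 * q)) q (n+1) * (1 + a ^ 2 * q ^ (2 * (n+1) + 1)) /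
      (qPoch q q (n+1) * (1 + a ^ 2 * q) * a ^ (2 * (n+1))) := by
    have h1 := qPoch_neg_pos a q hq0 ha (n+1)
    have h2 := qPoch_q_pos q hq0 hq1 (n+1)
    have h3 := hA (2*(n+1)+1)
    have h4 := hA 1
    positivity
  have hw0 : (0:ℝ) ≤ qPoch (-(a ^ 2 * q)) q n * (1 + a ^ 2 * q ^ (2 * n + 1)) /
      (qPoch q q n * (1 + a ^ 2 * q) * a ^ (2 * n)) := by
    have h3 := hA (2*n+1)
    positivity
  have hL : (0:ℝ) ≤ Real.sqrt (a ^ 2 * q ^ (n + 2)) *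
      Real.sqrt ((1 - q ^ (n+1)) * (1 + a ^ 2 * q ^ (n+1)) /
        ((1 + a ^ 2 * q ^ (2 * n + 1)) * (1 + a ^ 2 * q ^ (2 * n + 3)))) * dCoef a q (n+1) := by
    unfold dCoef; positivity
  have hR : (0:ℝ) ≤ Acoef a q n * dCoef a q n := by
    unfold Acoef dCoef
    have := hA (n+1); have := hA (2*n+1)
    positivity
  have hr : q ^ (n+2) * (q ^ e1) ^ 2 = (q ^ e0) ^ 2 := by
    rw [pow_two, pow_two, ← Real.rpow_natCast q (n+2), ← Real.rpow_add hq0,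
      ← Real.rpow_add hq0, ← Real.rpow_add hq0]
    congr 1
    rw [he1, he0]; push_cast; ring
  have hsq : (Real.sqrt (a ^ 2 * q ^ (n + 2)) *
      Real.sqrt ((1 - q ^ (n+1)) * (1 + a ^ 2 * q ^ (n+1)) /
        ((1 + a ^ 2 * q ^ (2 * n + 1)) * (1 + a ^ 2 * q ^ (2 * n + 3)))) * dCoef a q (n+1)) ^ 2
      = (Acoef a q n * dCoef a q n) ^ 2 := by
    unfold dCoef Acoef
    rw [← he1, ← he0]
    rw [mul_pow, mul_pow, mul_pow, mul_pow, mul_pow,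
      Real.sq_sqrt hu, Real.sq_sqrt hv, Real.sq_sqrt hw1, Real.sq_sqrt hw0]
    rw [qPoch_succ, qPoch_succ, ← hr]
    have hne : ((q:ℝ) ^ e1) ^ 2 ≠ 0 := by positivity
    field_simp
    ring
  calc Real.sqrt (a ^ 2 * q ^ (n + 2)) *
      Real.sqrt ((1 - q ^ (n+1)) * (1 + a ^ 2 * q ^ (n+1)) /
        ((1 + a ^ 2 * q ^ (2 * n + 1)) * (1 + a ^ 2 * q ^ (2 * n + 3)))) * dCoef a q (n+1)
      = Real.sqrt ((Real.sqrt (a ^ 2 * q ^ (n + 2)) *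
      Real.sqrt ((1 - q ^ (n+1)) * (1 + a ^ 2 * q ^ (n+1)) /
        ((1 + a ^ 2 * q ^ (2 * n + 1)) * (1 + a ^ 2 * q ^ (2 * n + 3)))) * dCoef a q (n+1)) ^ 2) := (Real.sqrt_sq hL).symm
    _ = Real.sqrt ((Acoef a q n * dCoef a q n) ^ 2) := by rw [hsq]
    _ = Acoef a q n * dCoef a q n := Real.sqrt_sq hR

lemma lem2 (q a : ℝ) (hq0 : 0 < q) (hq1 : q < 1) (ha : 0 < a) (n : ℕ) :
    aSub a q (n + 1) * dCoef a q n = Ccoef a q (n + 1) * dCoef a q (n + 1) := by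
  have hPn := qPoch_neg_pos a q hq0 ha n
  have hQn := qPoch_q_pos q hq0 hq1 n
  have h1q : 0 < 1 - q * q ^ n := by
    have h : q * q ^ n < 1 := by
      calc q * q ^ n ≤ q * 1 := by
            exact mul_le_mul_of_nonneg_left (pow_le_one₀ hq0.le hq1.le) hq0.le
        _ < 1 := by linarith
    linarith
  have hA : ∀ m : ℕ, (0:ℝ) < 1 + a ^ 2 * q ^ m := fun m => by positivity
  rw [aSub_succ_zpow a q hq0 n]
  set e1 : ℝ := -((((n:ℕ)+1 : ℕ) : ℝ) * (((n:ℕ)+1 : ℕ) + 3)) / 4 with he1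
  set e0 : ℝ := -((n : ℝ) * ((n:ℝ) + 3)) / 4 with he0
  have hu : (0:ℝ) ≤ a ^ 2 * q ^ (n + 2) := by positivity
  have hq' : (0:ℝ) ≤ 1 - q ^ (n+1) := by rw [pow_succ, mul_comm]; linarith
  have hv : (0:ℝ) ≤ (1 - q ^ (n+1)) * (1 + a ^ 2 * q ^ (n+1)) /
      ((1 + a ^ 2 * q ^ (2 * n + 1)) * (1 + a ^ 2 * q ^ (2 * n + 3))) := by
    have := hA (n+1); have := hA (2*n+1); have := hA (2*n+3)
    positivity
  have hw1 : (0:ℝ) ≤ qPoch (-(a ^ 2 * q)) q (n+1) * (1 + a ^ 2 * q ^ (2 * (n+1) + 1)) /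
      (qPoch q q (n+1) * (1 + a ^ 2 * q) * a ^ (2 * (n+1))) := by
    have h1 := qPoch_neg_pos a q hq0 ha (n+1)
    have h2 := qPoch_q_pos q hq0 hq1 (n+1)
    have h3 := hA (2*(n+1)+1)
    have h4 := hA 1
    positivity
  have hw0 : (0:ℝ) ≤ qPoch (-(a ^ 2 * q)) q n * (1 + a ^ 2 * q ^ (2 * n + 1)) /
      (qPoch q q n * (1 + a ^ 2 * q) * a ^ (2 * n)) := by
    have h3 := hA (2*n+1)
    positivity
  have hL : (0:ℝ) ≤ Real.sqrt (a ^ 2 * q ^ (n + 2)) *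
      Real.sqrt ((1 - q ^ (n+1)) * (1 + a ^ 2 * q ^ (n+1)) /
        ((1 + a ^ 2 * q ^ (2 * n + 1)) * (1 + a ^ 2 * q ^ (2 * n + 3)))) * dCoef a q n := by
    unfold dCoef; positivity
  have hR : (0:ℝ) ≤ Ccoef a q (n+1) * dCoef a q (n+1) := by
    unfold Ccoef dCoef
    have := hA (2*(n+1)+1)
    have h5 : (0:ℝ) ≤ a ^ 2 * q ^ (n+1+1) * (1 - q ^ (n+1)) := by positivity
    apply mul_nonneg
    · exact div_nonneg h5 (hA _).le
    · positivity
  have hr : q ^ (n+2) * (q ^ e1) ^ 2 = (q ^ e0) ^ 2 := by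
    rw [pow_two, pow_two, ← Real.rpow_natCast q (n+2), ← Real.rpow_add hq0,
      ← Real.rpow_add hq0, ← Real.rpow_add hq0]
    congr 1
    rw [he1, he0]; push_cast; ring
  have hsq : (Real.sqrt (a ^ 2 * q ^ (n + 2)) *
      Real.sqrt ((1 - q ^ (n+1)) * (1 + a ^ 2 * q ^ (n+1)) /
        ((1 + a ^ 2 * q ^ (2 * n + 1)) * (1 + a ^ 2 * q ^ (2 * n + 3)))) * dCoef a q n) ^ 2
      = (Ccoef a q (n+1) * dCoef a q (n+1)) ^ 2 := by
    unfold dCoef Ccoef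
    rw [← he1, ← he0]
    rw [mul_pow, mul_pow, mul_pow, mul_pow, mul_pow,
      Real.sq_sqrt hu, Real.sq_sqrt hv, Real.sq_sqrt hw1, Real.sq_sqrt hw0]
    rw [qPoch_succ, qPoch_succ, ← hr]
    have hne : ((q:ℝ) ^ e1) ^ 2 ≠ 0 := by positivity
    field_simp
    ring
  calc Real.sqrt (a ^ 2 * q ^ (n + 2)) *
      Real.sqrt ((1 - q ^ (n+1)) * (1 + a ^ 2 * q ^ (n+1)) /
        ((1 + a ^ 2 * q ^ (2 * n + 1)) * (1 + a ^ 2 * q ^ (2 * n + 3)))) * dCoef a q n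
      = Real.sqrt ((Real.sqrt (a ^ 2 * q ^ (n + 2)) *
      Real.sqrt ((1 - q ^ (n+1)) * (1 + a ^ 2 * q ^ (n+1)) /
        ((1 + a ^ 2 * q ^ (2 * n + 1)) * (1 + a ^ 2 * q ^ (2 * n + 3)))) * dCoef a q n) ^ 2) := (Real.sqrt_sq hL).symm
    _ = Real.sqrt ((Ccoef a q (n+1) * dCoef a q (n+1)) ^ 2) := by rw [hsq]
    _ = Ccoef a q (n+1) * dCoef a q (n+1) := Real.sqrt_sq hR

theorem symmetrization_of_recurrence (q a lam : ℝ) (hq0 : 0 < q) (hq1 : q < 1)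
    (ha : 0 < a) (beta' : ℕ → ℝ) (h0 : beta' 0 = 1)
    (hrec : ∀ n : ℕ, Acoef a q n * beta' (n + 1) + Ccoef a q n * beta' (n - 1) = lam * beta' n) :
    ∀ n : ℕ,
      aSub a q (n + 1) * (dCoef a q (n + 1) * beta' (n + 1)) +
          aSub a q n * (dCoef a q (n - 1) * beta' (n - 1)) =
        lam * (dCoef a q n * beta' n) := by
  intro n
  cases n with
  | zero =>
    have h0' : aSub a q 0 = 0 := by
      unfold aSub
      norm_num
    have hC0 : Ccoef a q 0 = 0 := by unfold Ccoef; norm_num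
    have key : Acoef a q 0 * beta' 1 = lam * beta' 0 := by
      have h := hrec 0
      rw [hC0] at h
      simpa using h
    simp only [h0', zero_mul, add_zero, Nat.zero_sub]
    rw [← mul_assoc]
    rw [show (0:ℕ) + 1 = 1 from rfl] at *
    rw [lem1 q a hq0 hq1 ha 0]
    linear_combination dCoef a q 0 * key
  | succ m =>
    have h := hrec (m + 1)
    simp only [Nat.add_sub_cancel] at h ⊢
    rw [← mul_assoc, ← mul_assoc, lem1 q a hq0 hq1 ha (m+1), lem2 q a hq0 hq1 ha m]
    linear_combination dCoef a q (m+1) * h
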